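/- arXiv:1609.07345 — 3 statements merged into one kernel-verified Lean document; each statement's English description precedes it below -/
import Mathlib

section
/- For the path graph P_n on n vertices: st_D(P_2) = 1, st_D(P_3) = 2, st_D(P_4) = 3, st_D(P_5) = 1, and st_D(P_n) = 2 for every n ≥ 6. -/
open SimpleGraph

/-- The distinguishing number of a graph: the least `d` such that there is a vertex
labeling with `d` labels preserved only by the trivial automorphism. -/
noncomputable def distNum {V : Type*} (G : SimpleGraph V) : ℕ :=
  sInf {d : ℕ | ∃ f : V → Fin d, ∀ φ : G ≃g G, (∀ x, f (φ x) = f x) → ∀ x, φ x = x}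

/-- The distinguishing stability of a graph: the minimum cardinality of a proper subset
`S` of the vertex set whose removal changes the distinguishing number. -/
noncomputable def stD {V : Type*} (G : SimpleGraph V) : ℕ :=
  sInf {k : ℕ | ∃ S : Set V, S ≠ Set.univ ∧ S.ncard = k ∧
    distNum (G.induce Sᶜ) ≠ distNum G}

/-- The distinguishing bondage number of a graph: the minimum cardinality of a set
of edges whose removal changes the distinguishing number. -/
noncomputable def bD {V : Type*} (G : SimpleGraph V) : ℕ :=
  sInf {k : ℕ | ∃ F : Set (Sym2 V), F ⊆ G.edgeSet ∧ F.ncard = k ∧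
    distNum (G.deleteEdges F) ≠ distNum G}

/-!
`D(Pₙ) = 2` for `n ≥ 2`: the reversal is a nontrivial automorphism, and marking an end vertex
kills it, because an automorphism fixing the left end of a run of consecutive vertices fixes the
run vertex by vertex. Deleting one vertex leaves two runs; reflecting one of them (or the whole
path about a deleted centre) gives `D ≥ 2`, and marking left ends of the runs gives `D ≤ 2`,
except for `P₅` minus its centre, which is `2K₂`: with two labels both edges are bichromatic and
then one of the two exchanges of the edges preserves the labels, so `D(2K₂) ≥ 3`. The same `2K₂`
splits off `Pₙ` minus the vertices `2, 5` when `n ≥ 6`. For `n ≤ 4` the number can only change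
when a single vertex is left, since every graph on two vertices has `D = 2`.
-/

namespace SimpleGraph

section Distinguishing

variable {V W : Type*} {G : SimpleGraph V} {H : SimpleGraph W} {d : ℕ}

def IsDistinguishing (G : SimpleGraph V) (f : V → Fin d) : Prop :=
  ∀ φ : G ≃g G, (∀ x, f (φ x) = f x) → ∀ x, φ x = x

lemma distNum_le {f : V → Fin d} (hf : G.IsDistinguishing f) : distNum G ≤ d :=
  Nat.sInf_le ⟨f, hf⟩

lemma exists_isDistinguishing [Finite V] : ∃ f : V → Fin (distNum G), G.IsDistinguishing f := by
  obtain ⟨m, ⟨e⟩⟩ := Finite.exists_equiv_fin V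
  exact Nat.sInf_mem (s := {d | ∃ f : V → Fin d, G.IsDistinguishing f})
    ⟨m, e, fun φ h x => e.injective (h x)⟩

lemma exists_isDistinguishing_fin_two [Finite V] (h : distNum G ≤ 2) :
    ∃ f : V → Fin 2, G.IsDistinguishing f := by
  obtain ⟨f, hf⟩ := exists_isDistinguishing (G := G)
  exact ⟨Fin.castLE h ∘ f, fun φ hφ => hf φ fun x => Fin.castLE_injective h (hφ x)⟩

lemma IsDistinguishing.comp_iso {f : W → Fin d} (hf : H.IsDistinguishing f) (e : G ≃g H) :
    G.IsDistinguishing (f ∘ e) := by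
  intro φ hφ x
  simpa using hf (e.symm.trans (φ.trans e)) (fun y => by simpa using hφ (e.symm y)) (e x)

lemma distNum_congr (e : G ≃g H) : distNum G = distNum H := by
  unfold distNum
  congr 1
  ext d
  constructor
  · rintro ⟨f, hf⟩
    exact ⟨f ∘ e.symm, IsDistinguishing.comp_iso hf e.symm⟩
  · rintro ⟨f, hf⟩
    exact ⟨f ∘ e, IsDistinguishing.comp_iso hf e⟩

lemma distNum_le_two (M : Set V)
    (hM : ∀ φ : G ≃g G, (∀ x, φ x ∈ M ↔ x ∈ M) → ∀ x, φ x = x) : distNum G ≤ 2 := by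
  classical
  refine distNum_le (f := fun x => if x ∈ M then 1 else 0) fun φ hφ => hM φ fun x => ?_
  have := hφ x
  simp only at this
  split_ifs at this <;> simp_all

lemma two_le_distNum [Finite V] (φ : G ≃g G) {x : V} (hx : φ x ≠ x) : 2 ≤ distNum G := by
  obtain ⟨f, hf⟩ := exists_isDistinguishing (G := G)
  by_contra! h
  have : Subsingleton (Fin (distNum G)) := Fin.subsingleton_iff_le_one.2 (by omega)
  exact hx (hf φ (fun _ => Subsingleton.elim _ _) x)

lemma distNum_eq_one [Nonempty V] [Subsingleton V] : distNum G = 1 := by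
  refine le_antisymm (distNum_le (f := fun _ => 0) fun _ _ _ => Subsingleton.elim _ _) ?_
  obtain ⟨f, -⟩ := exists_isDistinguishing (G := G)
  exact (f (Classical.arbitrary V)).pos

lemma distNum_eq_two_of_card (h : Nat.card V = 2) : distNum G = 2 := by
  classical
  obtain ⟨x, y, hxy, hV⟩ := Nat.card_eq_two_iff.1 h
  have hxy' : ∀ z, z = x ∨ z = y := fun z => by
    have : z ∈ ({x, y} : Set V) := hV ▸ Set.mem_univ z
    simpa using this
  have : Finite V := Nat.finite_of_card_ne_zero (by omega)
  refine le_antisymm (distNum_le_two {x} fun φ hφ z => ?_) ?_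
  · have hx : φ x = x := (hφ x).2 rfl
    rcases hxy' z with rfl | rfl
    · exact hx
    · exact (hxy' (φ z)).resolve_left fun h => hxy (φ.injective (hx.trans h.symm))
  · let σ : G ≃g G := ⟨Equiv.swap x y, fun {a b} => by
      rcases hxy' a with rfl | rfl <;> rcases hxy' b with rfl | rfl <;> simp [G.adj_comm]⟩
    exact two_le_distNum σ (x := x) (by simpa [σ] using hxy.symm)

lemma Iso.apply_eq_self_of_adj (φ : G ≃g G) {v w : V} (hv : φ v = v) (hvw : G.Adj v w)
    (h : ∀ u, G.Adj v u → u ≠ w → φ u = u) : φ w = w := by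
  by_contra hw
  have hadj : G.Adj v (φ w) := by simpa [hv] using φ.map_adj_iff.2 hvw
  exact hw (φ.injective (h _ hadj hw))

lemma stD_eq {k : ℕ} (S : Set V) (hS : S ≠ Set.univ) (hSk : S.ncard = k)
    (hSG : distNum (G.induce Sᶜ) ≠ distNum G)
    (hmin : ∀ S : Set V, S ≠ Set.univ → S.ncard < k → distNum (G.induce Sᶜ) = distNum G) :
    stD G = k := by
  refine le_antisymm (Nat.sInf_le ⟨S, hS, hSk, hSG⟩) ?_
  by_contra! hlt
  obtain ⟨T, hT, hTk, hTG⟩ : stD G ∈ {k : ℕ | ∃ S : Set V, S ≠ Set.univ ∧ S.ncard = k ∧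
      distNum (G.induce Sᶜ) ≠ distNum G} :=
    Nat.sInf_mem ⟨k, S, hS, hSk, hSG⟩
  exact hTG (hmin T hT (hTk ▸ hlt))

lemma distNum_induce_compl_of_ncard_eq_zero [Finite V] {S : Set V} (hS : S.ncard = 0) :
    distNum (G.induce Sᶜ) = distNum G := by
  rw [(Set.ncard_eq_zero).1 hS, Set.compl_empty]
  exact distNum_congr G.induceUnivIso

end Distinguishing

section Path

variable {n : ℕ} {T : Set (Fin n)} {l r : ℕ}

lemma pathGraph_induce_adj {x y : T} :
    ((pathGraph n).induce T).Adj x y ↔ x.1.1 + 1 = y.1.1 ∨ y.1.1 + 1 = x.1.1 := by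
  simp [pathGraph_adj]

lemma eq_of_val_val_eq {x y : T} (h : x.1.1 = y.1.1) : x = y :=
  Subtype.ext (Fin.ext h)

lemma pathGraph_induce_apply_eq_self_of_left_end
    (φ : (pathGraph n).induce T ≃g (pathGraph n).induce T) {x : T} (hx : φ x = x)
    (hend : ∀ y : T, y.1.1 + 1 ≠ x.1.1) {y : T} (hxy : x.1.1 ≤ y.1.1)
    (hrun : ∀ z : Fin n, x.1.1 ≤ z.1 → z.1 ≤ y.1.1 → z ∈ T) : φ y = y := by
  obtain ⟨d, hd⟩ := Nat.exists_eq_add_of_le hxy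
  induction d using Nat.strong_induction_on generalizing y with
  | _ d ih =>
    rcases d with _ | d
    · rwa [eq_of_val_val_eq (x := y) (y := x) hd]
    obtain ⟨z, hzd⟩ : ∃ z : T, z.1.1 = x.1.1 + d :=
      ⟨⟨⟨x.1.1 + d, by omega⟩, hrun _ (by simp) (by simp; omega)⟩, rfl⟩
    have hz : φ z = z := ih d (by omega) (by omega) (fun w h1 h2 => hrun w h1 (by omega)) hzd
    refine Iso.apply_eq_self_of_adj φ hz (pathGraph_induce_adj.2 (by omega)) fun u hu huy => ?_
    have hu : u.1.1 + 1 = z.1.1 :=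
      (pathGraph_induce_adj.1 hu).resolve_left fun h => huy (eq_of_val_val_eq (by omega))
    rcases d with _ | d
    · exact absurd (hu.trans hzd) (hend u)
    · exact ih d (by omega) (by omega) (fun w h1 h2 => hrun w h1 (by omega)) (by omega)

def reflectNat (l r k : ℕ) : ℕ := if l ≤ k ∧ k ≤ r then l + r - k else k

structure IsReflectableSegment (T : Set (Fin n)) (l r : ℕ) : Prop where
  lt : r < n
  mem : ∀ x y : Fin n, y.1 = reflectNat l r x.1 → x ∈ T → y ∈ T
  left : ∀ x ∈ T, x.1 + 1 ≠ l
  right : ∀ x ∈ T, x.1 ≠ r + 1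

namespace IsReflectableSegment

variable (h : IsReflectableSegment T l r)

def reflect (x : T) : T :=
  ⟨⟨reflectNat l r x.1.1, by have := h.lt; unfold reflectNat; split_ifs <;> omega⟩,
    h.mem _ _ rfl x.2⟩

lemma reflect_involutive : Function.Involutive h.reflect := fun x => by
  apply eq_of_val_val_eq
  simp only [reflect, reflectNat]
  split_ifs <;> omega

def reflectIso : (pathGraph n).induce T ≃g (pathGraph n).induce T where
  toEquiv := h.reflect_involutive.toPerm
  map_rel_iff' {x y} := by
    have := h.left _ x.2
    have := h.left _ y.2
    have := h.right _ x.2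
    have := h.right _ y.2
    simp only [Function.Involutive.coe_toPerm, pathGraph_induce_adj, reflect, reflectNat]
    split_ifs <;> omega

lemma reflectIso_apply_val (x : T) : (h.reflectIso x).1.1 = reflectNat l r x.1.1 := rfl

lemma reflectIso_apply_ne (hlr : l < r) {x : T} (hx : x.1.1 = l) : h.reflectIso x ≠ x := by
  intro hfix
  have := congrArg (fun y : T => y.1.1) hfix
  simp only [reflectIso_apply_val, reflectNat] at this
  split_ifs at this <;> omega

end IsReflectableSegment

lemma distNum_pathGraph (hn : 2 ≤ n) : distNum (pathGraph n) = 2 := by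
  rw [← distNum_congr (pathGraph n).induceUnivIso]
  let x₀ : (Set.univ : Set (Fin n)) := ⟨⟨0, by omega⟩, trivial⟩
  refine le_antisymm (distNum_le_two {x₀} fun φ hφ y => ?_) ?_
  · exact pathGraph_induce_apply_eq_self_of_left_end φ ((hφ x₀).2 rfl) (fun _ => by simp [x₀])
      (Nat.zero_le _) fun _ _ _ => trivial
  · have h : IsReflectableSegment (Set.univ : Set (Fin n)) 0 (n - 1) :=
      ⟨by omega, fun _ _ _ _ => trivial, fun _ _ => by omega, fun x _ => by omega⟩
    exact two_le_distNum h.reflectIso (h.reflectIso_apply_ne (by omega) (x := x₀) rfl)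

def pathGraphReverse (n : ℕ) : pathGraph n ≃g pathGraph n where
  toEquiv := Fin.revPerm
  map_rel_iff' {a b} := by simp [pathGraph_adj, Fin.val_rev]; omega

lemma distNum_pathGraph_induce_compl_singleton_rev (v : Fin n) :
    distNum ((pathGraph n).induce {v}ᶜ) = distNum ((pathGraph n).induce {v.rev}ᶜ) :=
  distNum_congr ((pathGraphReverse n).induce
    ((Set.bijOn_singleton.2 rfl).compl (pathGraphReverse n).bijective))

lemma mem_compl_singleton_iff_val_ne {v x : Fin n} : x ∈ ({v} : Set (Fin n))ᶜ ↔ x.1 ≠ v.1 := by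
  simp [Fin.ext_iff]

lemma two_le_distNum_pathGraph_induce_compl_singleton (hn : 3 ≤ n) (v : Fin n) :
    2 ≤ distNum ((pathGraph n).induce {v}ᶜ) := by
  have key : ∀ l r, l < r → l ≠ v.1 → r < n → (l = 0 ∨ l = v.1 + 1) → (r + 1 = n ∨ r + 1 = v.1) →
      (l ≤ v.1 → v.1 ≤ r → l + r = 2 * v.1) → 2 ≤ distNum ((pathGraph n).induce {v}ᶜ) := by
    intro l r hlr hlv hrn hl hr hv
    have h : IsReflectableSegment {v}ᶜ l r := by
      refine ⟨hrn, fun x y hy hx => ?_, fun x hx => ?_, fun x hx => ?_⟩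
      · rw [mem_compl_singleton_iff_val_ne] at hx ⊢
        unfold reflectNat at hy
        split_ifs at hy <;> omega
      all_goals rw [mem_compl_singleton_iff_val_ne] at hx; omega
    exact two_le_distNum h.reflectIso
      (h.reflectIso_apply_ne hlr (x := ⟨⟨l, by omega⟩, mem_compl_singleton_iff_val_ne.2 hlv⟩) rfl)
  by_cases hr : v.1 + 3 ≤ n
  · exact key (v.1 + 1) (n - 1) (by omega) (by omega) (by omega) (by omega) (by omega) (by omega)
  by_cases hl : 2 ≤ v.1
  · exact key 0 (v.1 - 1) (by omega) (by omega) (by omega) (by omega) (by omega) (by omega)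
  · exact key 0 (n - 1) (by omega) (by omega) (by omega) (by omega) (by omega) (by omega)

lemma distNum_pathGraph_induce_compl_singleton_le_two_of_le_one (v : Fin n) (hv : v.1 ≤ 1)
    (hvn : v.1 + 2 ≤ n) : distNum ((pathGraph n).induce {v}ᶜ) ≤ 2 := by
  obtain ⟨w, hw⟩ : ∃ w : ↥(({v} : Set (Fin n))ᶜ), w.1.1 = v.1 + 1 :=
    ⟨⟨⟨v.1 + 1, by omega⟩, mem_compl_singleton_iff_val_ne.2 (by simp)⟩, rfl⟩
  refine distNum_le_two {w} fun φ hφ => ?_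
  have hright : ∀ y : ↥(({v} : Set (Fin n))ᶜ), v.1 < y.1.1 → φ y = y := fun y hy =>
    pathGraph_induce_apply_eq_self_of_left_end φ ((hφ w).2 rfl)
      (fun z => by have := mem_compl_singleton_iff_val_ne.1 z.2; omega) (by omega)
      fun z h _ => mem_compl_singleton_iff_val_ne.2 (by omega)
  intro y
  rcases lt_or_gt_of_ne (mem_compl_singleton_iff_val_ne.1 y.2) with hy | hy
  · -- `y` is the vertex `0` and `v = 1`: every other vertex is fixed, hence so is `y`
    by_contra hne
    have hφy : v.1 < (φ y).1.1 := by
      have := mem_compl_singleton_iff_val_ne.1 (φ y).2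
      by_contra h
      exact hne (eq_of_val_val_eq (by omega))
    exact hne (φ.injective (hright _ hφy))
  · exact hright y hy

lemma distNum_pathGraph_induce_compl_singleton_le_two_of_add_four_le (v : Fin n) (hv : 1 ≤ v.1)
    (hvn : v.1 + 4 ≤ n) : distNum ((pathGraph n).induce {v}ᶜ) ≤ 2 := by
  have pt : ∀ k, k < n → k ≠ v.1 → ∃ w : ↥(({v} : Set (Fin n))ᶜ), w.1.1 = k :=
    fun k hk hkv => ⟨⟨⟨k, hk⟩, mem_compl_singleton_iff_val_ne.2 hkv⟩, rfl⟩
  obtain ⟨w₀, hw₀⟩ := pt 0 (by omega) (by omega)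
  obtain ⟨w₁, hw₁⟩ := pt (v.1 + 1) (by omega) (by omega)
  obtain ⟨w₂, hw₂⟩ := pt (v.1 + 2) (by omega) (by omega)
  obtain ⟨w₃, hw₃⟩ := pt (v.1 + 3) (by omega) (by omega)
  refine distNum_le_two {x | x.1.1 = 0 ∨ x.1.1 = v.1 + 1 ∨ x.1.1 = v.1 + 2} fun φ hφ => ?_
  have hne : ∀ x y, x.1.1 ≠ y.1.1 → (φ x).1.1 ≠ (φ y).1.1 := fun x y h h' =>
    h (congrArg (·.1.1) (φ.injective (eq_of_val_val_eq h')))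
  have hadj : ∀ x y, x.1.1 + 1 = y.1.1 → (φ x).1.1 + 1 = (φ y).1.1 ∨ (φ y).1.1 + 1 = (φ x).1.1 :=
    fun x y h => pathGraph_induce_adj.1 (φ.map_adj_iff.2 (pathGraph_induce_adj.2 (Or.inl h)))
  have h₀ := (hφ w₀).2 (by simp [hw₀])
  have h₁ := (hφ w₁).2 (by simp [hw₁])
  have h₂ := (hφ w₂).2 (by simp [hw₂])
  simp only [Set.mem_ofPred_eq] at h₀ h₁ h₂
  have h₁₂ := hadj w₁ w₂ (by omega)
  have h₂₃ := hadj w₂ w₃ (by omega)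
  have := hne w₀ w₁ (by omega)
  have := hne w₀ w₂ (by omega)
  have := hne w₁ w₃ (by omega)
  have := mem_compl_singleton_iff_val_ne.1 (φ w₃).2
  -- the marked vertices `v + 1, v + 2` are the only adjacent ones, and only `v + 2` has an
  -- unmarked neighbour, so `φ` fixes the left ends `0` and `v + 1` of both components
  have hfix₀ : φ w₀ = w₀ := eq_of_val_val_eq (by omega)
  have hfix₁ : φ w₁ = w₁ := eq_of_val_val_eq (by omega)
  intro y
  have hyv := mem_compl_singleton_iff_val_ne.1 y.2
  rcases lt_or_gt_of_ne hyv with hy | hy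
  · exact pathGraph_induce_apply_eq_self_of_left_end φ hfix₀ (fun _ => by omega) (by omega)
      fun z _ _ => mem_compl_singleton_iff_val_ne.2 (by omega)
  · exact pathGraph_induce_apply_eq_self_of_left_end φ hfix₁
      (fun z => by have := mem_compl_singleton_iff_val_ne.1 z.2; omega) (by omega)
      fun z _ _ => mem_compl_singleton_iff_val_ne.2 (by omega)

lemma distNum_pathGraph_induce_compl_singleton (hn : 3 ≤ n) (v : Fin n)
    (hv : ¬(n = 5 ∧ v.1 = 2)) : distNum ((pathGraph n).induce {v}ᶜ) = 2 := by
  wlog hvn : 2 * v.1 + 1 ≤ n generalizing v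
  · rw [distNum_pathGraph_induce_compl_singleton_rev]
    exact this v.rev (by simp [Fin.val_rev]; omega) (by simp [Fin.val_rev]; omega)
  refine le_antisymm ?_ (two_le_distNum_pathGraph_induce_compl_singleton hn v)
  rcases le_or_gt v.1 1 with h | h
  · exact distNum_pathGraph_induce_compl_singleton_le_two_of_le_one v h (by omega)
  · exact distNum_pathGraph_induce_compl_singleton_le_two_of_add_four_le v (by omega) (by omega)

lemma three_le_distNum_pathGraph_induce (hn : 5 ≤ n)
    (hT : ∀ x : Fin n, x.1 ≤ 5 → (x ∈ T ↔ x.1 ≠ 2 ∧ x.1 ≠ 5)) :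
    3 ≤ distNum ((pathGraph n).induce T) := by
  have hrefl : ∀ l r, (l = 0 ∧ r = 1) ∨ (l = 3 ∧ r = 4) ∨ (l = 0 ∧ r = 4) →
      IsReflectableSegment T l r := by
    intro l r hlr
    refine ⟨by omega, fun x y hy hx => ?_, fun x hx h => ?_, fun x hx h => ?_⟩
    · unfold reflectNat at hy
      split_ifs at hy
      · have := (hT x (by omega)).1 hx
        exact (hT y (by omega)).2 (by omega)
      · rwa [Fin.ext hy]
    all_goals have := (hT x (by omega)).1 hx; omega
  have not_dist : ∀ (g : ℕ → Fin 2) l r, (l = 0 ∧ r = 1) ∨ (l = 3 ∧ r = 4) ∨ (l = 0 ∧ r = 4) →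
      (∀ k, l ≤ k → k ≤ r → k ≠ 2 → g (l + r - k) = g k) →
      ¬((pathGraph n).induce T).IsDistinguishing (fun x => g x.1.1) := by
    intro g l r hlr hsym hg
    have h := hrefl l r hlr
    refine h.reflectIso_apply_ne (by omega) (x := ⟨⟨l, by omega⟩, (hT _ (by simp; omega)).2
      (by simp; omega)⟩) rfl (hg _ (fun x => ?_) _)
    simp only [IsReflectableSegment.reflectIso_apply_val, reflectNat]
    split_ifs with hx
    · exact hsym _ hx.1 hx.2 ((hT x (by omega)).1 x.2).1
    · rfl
  have key : ∀ g : ℕ → Fin 2, ((pathGraph n).induce T).IsDistinguishing (fun x => g x.1.1) →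
      g 3 ≠ g 4 ∧ g 0 ≠ g 4 := by
    intro g hg
    have h₀₁ : g 0 ≠ g 1 := fun h => not_dist g 0 1 (by omega) (fun k _ _ _ => by
      interval_cases k <;> simp [h]) hg
    have h₃₄ : g 3 ≠ g 4 := fun h => not_dist g 3 4 (by omega) (fun k _ _ _ => by
      interval_cases k <;> simp [h]) hg
    refine ⟨h₃₄, fun h₀₄ => not_dist g 0 4 (by omega) (fun k _ _ _ => ?_) hg⟩
    have h₁₃ : g 1 = g 3 := by omega
    interval_cases k <;> simp_all
  by_contra! h
  obtain ⟨f, hf⟩ := exists_isDistinguishing_fin_two (G := (pathGraph n).induce T) (by omega)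
  obtain ⟨g, hfg⟩ : ∃ g : ℕ → Fin 2, f = fun x => g x.1.1 := ⟨_, funext fun x =>
    ((Fin.val_injective.comp Subtype.val_injective).extend_apply f 0 x).symm⟩
  subst hfg
  have hg' : ((pathGraph n).induce T).IsDistinguishing (fun x => g (reflectNat 3 4 x.1.1)) :=
    hf.comp_iso (hrefl 3 4 (by omega)).reflectIso
  obtain ⟨h₃₄, h₀₄⟩ := key g hf
  have h₀₃ := (key (fun k => g (reflectNat 3 4 k)) hg').2
  norm_num [reflectNat] at h₀₃
  omega

lemma distNum_pathGraph_induce_compl_of_ncard_le_one (hn : 3 ≤ n) (hn5 : n ≠ 5)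
    {S : Set (Fin n)} (hS : S.ncard ≤ 1) :
    distNum ((pathGraph n).induce Sᶜ) = distNum (pathGraph n) := by
  rcases Nat.le_one_iff_eq_zero_or_eq_one.1 hS with h | h
  · exact distNum_induce_compl_of_ncard_eq_zero h
  · obtain ⟨v, rfl⟩ := Set.ncard_eq_one.1 h
    rw [distNum_pathGraph_induce_compl_singleton hn v (by omega), distNum_pathGraph (by omega)]

lemma stD_pathGraph_of_le_four (hn : 2 ≤ n) (hn4 : n ≤ 4) : stD (pathGraph n) = n - 1 := by
  let v : Fin n := ⟨0, by omega⟩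
  refine stD_eq {v}ᶜ (fun h => by simpa using congrArg (v ∈ ·) h)
    (by rw [Set.ncard_compl, Set.ncard_singleton, Nat.card_eq_fintype_card, Fintype.card_fin]) ?_
    fun S _ hS => ?_
  · rw [compl_compl, distNum_eq_one, distNum_pathGraph hn]
    omega
  obtain h | h | h : S.ncard = 0 ∨ S.ncard = 1 ∨ S.ncard = 2 := by omega
  · exact distNum_induce_compl_of_ncard_eq_zero h
  · exact distNum_pathGraph_induce_compl_of_ncard_le_one (by omega) (by omega) h.le
  · rw [distNum_pathGraph hn, distNum_eq_two_of_card]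
    rw [Nat.card_coe_set_eq, Set.ncard_compl, h, Nat.card_eq_fintype_card, Fintype.card_fin]
    omega

lemma stD_pathGraph_five : stD (pathGraph 5) = 1 := by
  refine stD_eq {2} (fun h => by simpa using congrArg ((0 : Fin 5) ∈ ·) h) (Set.ncard_singleton _)
    ?_ fun S _ hS => distNum_induce_compl_of_ncard_eq_zero (by omega)
  have := three_le_distNum_pathGraph_induce (T := ({2} : Set (Fin 5))ᶜ) le_rfl
    fun x _ => by simp [Fin.ext_iff]; omega
  rw [distNum_pathGraph (by norm_num)]
  omega

lemma stD_pathGraph_of_six_le (hn : 6 ≤ n) : stD (pathGraph n) = 2 := by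
  let S : Set (Fin n) := {⟨2, by omega⟩, ⟨5, by omega⟩}
  refine stD_eq S
    (fun h => by simpa [S, Fin.ext_iff] using congrArg ((⟨0, by omega⟩ : Fin n) ∈ ·) h)
    (Set.ncard_pair (by simp [Fin.ext_iff])) ?_ fun S _ hS =>
      distNum_pathGraph_induce_compl_of_ncard_le_one (by omega) (by omega) (by omega)
  have := three_le_distNum_pathGraph_induce (T := Sᶜ) (by omega)
    fun x _ => by simp [S, Fin.ext_iff]
  rw [distNum_pathGraph (by omega)]
  omega

end Path

end SimpleGraph

/-- Distinguishing stability of paths. -/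
theorem stD_pathGraph :
    stD (pathGraph 2) = 1 ∧ stD (pathGraph 3) = 2 ∧ stD (pathGraph 4) = 3 ∧
      stD (pathGraph 5) = 1 ∧ ∀ n : ℕ, 6 ≤ n → stD (pathGraph n) = 2 :=
  ⟨stD_pathGraph_of_le_four le_rfl (by norm_num),
    stD_pathGraph_of_le_four (by norm_num) (by norm_num),
    stD_pathGraph_of_le_four (by norm_num) le_rfl,
    stD_pathGraph_five,
    fun _ => stD_pathGraph_of_six_le⟩
end

section
/- For all integers n ≥ m ≥ 1, the distinguishing stability of the complete bipartite graph K_{n,m} satisfies st_D(K_{n,m}) = 2 if n = m + 1, and st_D(K_{n,m}) = 1 otherwise. -/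
open SimpleGraph

section Helpers
open Sum

lemma cbg_adj {α β : Type*} {x y : α ⊕ β} :
    (completeBipartiteGraph α β).Adj x y ↔ x.isLeft ≠ y.isLeft := by
  cases x <;> cases y <;> simp

/-- Iso of complete bipartite graphs from equivs of parts. -/
def cbgIsoOfEquiv {α β α' β' : Type*} (e : α ≃ α') (f : β ≃ β') :
    completeBipartiteGraph α β ≃g completeBipartiteGraph α' β' :=
  ⟨Equiv.sumCongr e f, by rintro (x | x) (y | y) <;> simp⟩

/-- Swap of two same-side vertices is an automorphism. -/
def cbgSwap {α β : Type*} [DecidableEq α] [DecidableEq β] (u v : α ⊕ β)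
    (h : u.isLeft = v.isLeft) :
    completeBipartiteGraph α β ≃g completeBipartiteGraph α β :=
  ⟨Equiv.swap u v, by
    intro x y
    have hL : ∀ z : α ⊕ β, (Equiv.swap u v z).isLeft = z.isLeft := by
      intro z
      rcases eq_or_ne z u with rfl | hu
      · rw [Equiv.swap_apply_left]; exact h.symm
      rcases eq_or_ne z v with rfl | hv
      · rw [Equiv.swap_apply_right]; exact h
      · rw [Equiv.swap_apply_of_ne_of_ne hu hv]
    rw [cbg_adj, cbg_adj, hL, hL]⟩

/-- Side-flipping automorphism from an equivalence of the parts. -/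
def cbgFlip {α β : Type*} (g : α ≃ β) :
    completeBipartiteGraph α β ≃g completeBipartiteGraph α β :=
  ⟨(Equiv.sumCongr g g.symm).trans (Equiv.sumComm β α), by rintro (x | x) (y | y) <;> simp⟩


lemma distNum_mem_aux {V W : Type*} {G : SimpleGraph V} {H : SimpleGraph W} (e : G ≃g H) {d : ℕ}
    (h : ∃ f : V → Fin d, ∀ φ : G ≃g G, (∀ x, f (φ x) = f x) → ∀ x, φ x = x) :
    ∃ f : W → Fin d, ∀ φ : H ≃g H, (∀ x, f (φ x) = f x) → ∀ x, φ x = x := by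
  obtain ⟨f, hf⟩ := h
  refine ⟨f ∘ e.symm, fun φ hφ x => ?_⟩
  have hψ := hf ((e.trans φ).trans e.symm) (fun y => ?_) (e.symm x)
  · have : e.symm (φ (e (e.symm x))) = e.symm x := hψ
    simpa using congrArg e this
  · simpa using hφ (e y)

lemma distNum_iso {V W : Type*} {G : SimpleGraph V} {H : SimpleGraph W} (e : G ≃g H) :
    distNum G = distNum H := by
  unfold distNum
  congr 1
  ext d
  exact ⟨fun h => distNum_mem_aux e h, fun h => distNum_mem_aux e.symm h⟩

lemma side_dichotomy {α β : Type*}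
    (φ : completeBipartiteGraph α β ≃g completeBipartiteGraph α β) :
    (∀ x, (φ x).isLeft = x.isLeft) ∨ (∀ x, (φ x).isLeft = !x.isLeft) := by
  have key : ∀ x y : α ⊕ β, ((φ x).isLeft = (φ y).isLeft) ↔ (x.isLeft = y.isLeft) := by
    intro x y
    have h := φ.map_adj_iff (v := x) (w := y)
    rw [cbg_adj, cbg_adj] at h
    exact not_iff_not.mp h
  by_cases h0 : ∀ x, (φ x).isLeft = x.isLeft
  · exact Or.inl h0
  · push_neg at h0
    obtain ⟨x0, hx0⟩ := h0
    refine Or.inr fun x => ?_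
    have k := key x x0
    revert k hx0
    generalize (φ x).isLeft = p
    generalize (φ x0).isLeft = q
    generalize x.isLeft = r
    generalize x0.isLeft = s
    revert p q r s
    decide

lemma distinguishing_inj {a b d : ℕ} (f : Fin a ⊕ Fin b → Fin d)
    (hf : ∀ φ : completeBipartiteGraph (Fin a) (Fin b) ≃g completeBipartiteGraph (Fin a) (Fin b),
      (∀ x, f (φ x) = f x) → ∀ x, φ x = x) :
    ∀ u v : Fin a ⊕ Fin b, u.isLeft = v.isLeft → f u = f v → u = v := by
  intro u v hside hfuv
  by_contra hne
  have hpres : ∀ x, f (Equiv.swap u v x) = f x := by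
    intro x
    rcases eq_or_ne x u with rfl | hu
    · rw [Equiv.swap_apply_left]; exact hfuv.symm
    rcases eq_or_ne x v with rfl | hv
    · rw [Equiv.swap_apply_right]; exact hfuv
    · rw [Equiv.swap_apply_of_ne_of_ne hu hv]
  have h2 := hf (cbgSwap u v hside) hpres u
  have : Equiv.swap u v u = u := h2
  rw [Equiv.swap_apply_left] at this
  exact hne this.symm

lemma eq_inl_of_isLeft {α β : Type*} {x : α ⊕ β} (h : x.isLeft = true) : ∃ i, x = inl i := by
  cases x with
  | inl i => exact ⟨i, rfl⟩
  | inr j => simp at h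

lemma eq_inr_of_isLeft {α β : Type*} {x : α ⊕ β} (h : x.isLeft = false) : ∃ j, x = inr j := by
  cases x with
  | inl i => simp at h
  | inr j => exact ⟨j, rfl⟩

lemma distNum_cbg (a b : ℕ) :
    distNum (completeBipartiteGraph (Fin a) (Fin b)) =
      if a = b then (if a = 0 then 0 else a + 1) else max a b := by
  -- lower bound from injectivity on each side
  have hlow : ∀ d : ℕ, (∃ f : Fin a ⊕ Fin b → Fin d,
      ∀ φ : completeBipartiteGraph (Fin a) (Fin b) ≃g completeBipartiteGraph (Fin a) (Fin b),
        (∀ x, f (φ x) = f x) → ∀ x, φ x = x) → a ≤ d ∧ b ≤ d := by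
    rintro d ⟨f, hf⟩
    have key := distinguishing_inj f hf
    have h1 : Function.Injective (f ∘ inl) := by
      intro i j h
      have := key (inl i) (inl j) rfl h
      exact Sum.inl.injEq .. ▸ this
    have h2 : Function.Injective (f ∘ inr) := by
      intro i j h
      have := key (inr i) (inr j) rfl h
      exact Sum.inr.injEq .. ▸ this
    constructor
    · simpa using Fintype.card_le_of_injective _ h1
    · simpa using Fintype.card_le_of_injective _ h2
  by_cases hab : a = b
  · subst hab
    by_cases ha : a = 0
    · subst ha
      rw [if_pos rfl, if_pos rfl]
      apply Nat.sInf_eq_zero.mpr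
      left
      exact ⟨Sum.elim Fin.elim0 Fin.elim0, fun φ _ x => by rcases x with i | i <;> exact i.elim0⟩
    · rw [if_pos rfl, if_neg ha]
      have hmem : ∃ f : Fin a ⊕ Fin a → Fin (a + 1),
          ∀ φ : completeBipartiteGraph (Fin a) (Fin a) ≃g completeBipartiteGraph (Fin a) (Fin a),
            (∀ x, f (φ x) = f x) → ∀ x, φ x = x := by
        refine ⟨Sum.elim Fin.castSucc Fin.succ, fun φ hφ => ?_⟩
        rcases side_dichotomy φ with hs | hs
        · intro x
          cases x with
          | inl i =>
            obtain ⟨i', hi'⟩ := eq_inl_of_isLeft (x := φ (inl i)) (by rw [hs]; rfl)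
            have h := hφ (inl i)
            rw [hi'] at h ⊢
            simp only [Sum.elim_inl] at h
            rw [Fin.castSucc_injective _ h]
          | inr j =>
            obtain ⟨j', hj'⟩ := eq_inr_of_isLeft (x := φ (inr j)) (by rw [hs]; rfl)
            have h := hφ (inr j)
            rw [hj'] at h ⊢
            simp only [Sum.elim_inr] at h
            rw [Fin.succ_injective _ h]
        · exfalso
          set i0 : Fin a := ⟨0, Nat.pos_of_ne_zero ha⟩ with hi0
          obtain ⟨j, hj⟩ := eq_inr_of_isLeft (x := φ (inl i0)) (by rw [hs]; rfl)
          have h := hφ (inl i0)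
          rw [hj] at h
          simp only [Sum.elim_inr, Sum.elim_inl] at h
          have := congrArg Fin.val h
          simp [hi0] at this
      have hlow2 : ∀ d ∈ {d : ℕ | ∃ f : Fin a ⊕ Fin a → Fin d,
          ∀ φ : completeBipartiteGraph (Fin a) (Fin a) ≃g completeBipartiteGraph (Fin a) (Fin a),
            (∀ x, f (φ x) = f x) → ∀ x, φ x = x}, a + 1 ≤ d := by
        intro d hd
        have had : a ≤ d := (hlow d hd).1
        by_contra hcon
        have hda : d = a := by omega
        subst hda
        obtain ⟨f, hf⟩ := hd
        have key := distinguishing_inj f hf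
        have h1 : Function.Injective (f ∘ inl) := by
          intro i j h
          have := key (inl i) (inl j) rfl h
          exact Sum.inl.injEq .. ▸ this
        have h2 : Function.Injective (f ∘ inr) := by
          intro i j h
          have := key (inr i) (inr j) rfl h
          exact Sum.inr.injEq .. ▸ this
        have b1 : Function.Bijective (f ∘ inl) := (Finite.injective_iff_bijective).mp h1
        have b2 : Function.Bijective (f ∘ inr) := (Finite.injective_iff_bijective).mp h2
        set e1 := Equiv.ofBijective _ b1
        set e2 := Equiv.ofBijective _ b2
        set g := e1.trans e2.symm with hg
        have hpres : ∀ x, f ((cbgFlip g) x) = f x := by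
          intro x
          cases x with
          | inl i =>
            show f (inr (e2.symm (e1 i))) = f (inl i)
            exact e2.apply_symm_apply (e1 i)
          | inr j =>
            show f (inl (e1.symm (e2 j))) = f (inr j)
            exact e1.apply_symm_apply (e2 j)
        set i0 : Fin d := ⟨0, Nat.pos_of_ne_zero ha⟩ with hi0
        have := hf (cbgFlip g) hpres (inl i0)
        have h3 : (inr (g i0) : Fin d ⊕ Fin d) = inl i0 := this
        cases h3
      exact le_antisymm (Nat.sInf_le hmem) (le_csInf ⟨_, hmem⟩ hlow2)
  · rw [if_neg hab]
    have hmem : ∃ f : Fin a ⊕ Fin b → Fin (max a b),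
        ∀ φ : completeBipartiteGraph (Fin a) (Fin b) ≃g completeBipartiteGraph (Fin a) (Fin b),
          (∀ x, f (φ x) = f x) → ∀ x, φ x = x := by
      refine ⟨Sum.elim (Fin.castLE (le_max_left a b)) (Fin.castLE (le_max_right a b)),
        fun φ hφ => ?_⟩
      rcases side_dichotomy φ with hs | hs
      · intro x
        cases x with
        | inl i =>
          obtain ⟨i', hi'⟩ := eq_inl_of_isLeft (x := φ (inl i)) (by rw [hs]; rfl)
          have h := hφ (inl i)
          rw [hi'] at h ⊢
          simp only [Sum.elim_inl] at h
          rw [Fin.castLE_injective _ h]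
        | inr j =>
          obtain ⟨j', hj'⟩ := eq_inr_of_isLeft (x := φ (inr j)) (by rw [hs]; rfl)
          have h := hφ (inr j)
          rw [hj'] at h ⊢
          simp only [Sum.elim_inr] at h
          rw [Fin.castLE_injective _ h]
      · exfalso
        have hab1 : ∀ i : Fin a, ∃ j : Fin b, φ (inl i) = inr j := fun i =>
          eq_inr_of_isLeft (by rw [hs]; rfl)
        have hab2 : ∀ j : Fin b, ∃ i : Fin a, φ (inr j) = inl i := fun j =>
          eq_inl_of_isLeft (by rw [hs]; rfl)
        have hinj1 : Function.Injective (fun i => (hab1 i).choose) := by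
          intro i j h
          have h1 := (hab1 i).choose_spec
          have h2 := (hab1 j).choose_spec
          simp only at h
          rw [h] at h1
          have := φ.injective (h1.trans h2.symm)
          exact Sum.inl.injEq .. ▸ this
        have hinj2 : Function.Injective (fun j => (hab2 j).choose) := by
          intro i j h
          have h1 := (hab2 i).choose_spec
          have h2 := (hab2 j).choose_spec
          simp only at h
          rw [h] at h1
          have := φ.injective (h1.trans h2.symm)
          exact Sum.inr.injEq .. ▸ this
        have c1 : a ≤ b := by simpa using Fintype.card_le_of_injective _ hinj1
        have c2 : b ≤ a := by simpa using Fintype.card_le_of_injective _ hinj2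
        omega
    have hlow2 : ∀ d ∈ {d : ℕ | ∃ f : Fin a ⊕ Fin b → Fin d,
        ∀ φ : completeBipartiteGraph (Fin a) (Fin b) ≃g completeBipartiteGraph (Fin a) (Fin b),
          (∀ x, f (φ x) = f x) → ∀ x, φ x = x}, max a b ≤ d := by
      intro d hd
      have := hlow d hd
      omega
    exact le_antisymm (Nat.sInf_le hmem) (le_csInf ⟨_, hmem⟩ hlow2)

lemma distNum_cbg' (α β : Type*) [Finite α] [Finite β] :
    distNum (completeBipartiteGraph α β) =
      if Nat.card α = Nat.card β then (if Nat.card α = 0 then 0 else Nat.card α + 1)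
      else max (Nat.card α) (Nat.card β) := by
  rw [distNum_iso (cbgIsoOfEquiv (Finite.equivFin α) (Finite.equivFin β)), distNum_cbg]

/-- The induced subgraph of a complete bipartite graph is complete bipartite. -/
def cbgInduceIso {α β : Type*} (T : Set (α ⊕ β)) :
    completeBipartiteGraph {a // Sum.inl a ∈ T} {b // Sum.inr b ∈ T} ≃g
      (completeBipartiteGraph α β).induce T :=
  ⟨Equiv.subtypeSum.symm, by
    rintro (⟨x, hx⟩ | ⟨x, hx⟩) (⟨y, hy⟩ | ⟨y, hy⟩) <;> simp [Equiv.subtypeSum]⟩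

lemma distNum_induce (n m : ℕ) (S : Set (Fin n ⊕ Fin m)) :
    distNum ((completeBipartiteGraph (Fin n) (Fin m)).induce Sᶜ) =
      (if Nat.card {i : Fin n // Sum.inl i ∈ Sᶜ} = Nat.card {j : Fin m // Sum.inr j ∈ Sᶜ}
       then (if Nat.card {i : Fin n // Sum.inl i ∈ Sᶜ} = 0 then 0
             else Nat.card {i : Fin n // Sum.inl i ∈ Sᶜ} + 1)
       else max (Nat.card {i : Fin n // Sum.inl i ∈ Sᶜ}) (Nat.card {j : Fin m // Sum.inr j ∈ Sᶜ})) := by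
  rw [← distNum_iso (cbgInduceIso Sᶜ), distNum_cbg']

lemma card_ne {k : ℕ} (x : Fin k) : Nat.card {i : Fin k // i ≠ x} = k - 1 := by
  rw [Nat.card_eq_fintype_card]
  have h := Fintype.card_subtype_compl (fun i : Fin k => i = x)
  rw [Fintype.card_subtype_eq, Fintype.card_fin] at h
  exact h

/-- Abbreviation for the distinguishing number of `K_{a,b}`. -/
def Fab (a b : ℕ) : ℕ := if a = b then (if a = 0 then 0 else a + 1) else max a b

lemma distNum_rm_left (n m : ℕ) (x : Fin n) :
    distNum ((completeBipartiteGraph (Fin n) (Fin m)).induce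
      (({Sum.inl x} : Set (Fin n ⊕ Fin m))ᶜ)) = Fab (n - 1) m := by
  have h1 : Nat.card {i : Fin n // Sum.inl i ∈ ({Sum.inl x} : Set (Fin n ⊕ Fin m))ᶜ} = n - 1 := by
    rw [Nat.card_congr (Equiv.subtypeEquivRight (q := fun i => i ≠ x) fun i => by simp)]
    exact card_ne x
  have h2 : Nat.card {j : Fin m // Sum.inr j ∈ ({Sum.inl x} : Set (Fin n ⊕ Fin m))ᶜ} = m := by
    rw [Nat.card_congr (Equiv.subtypeUnivEquiv fun j => by simp), Nat.card_eq_fintype_card,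
      Fintype.card_fin]
  rw [distNum_induce, h1, h2, Fab]

lemma distNum_rm_right (n m : ℕ) (y : Fin m) :
    distNum ((completeBipartiteGraph (Fin n) (Fin m)).induce
      (({Sum.inr y} : Set (Fin n ⊕ Fin m))ᶜ)) = Fab n (m - 1) := by
  have h1 : Nat.card {i : Fin n // Sum.inl i ∈ ({Sum.inr y} : Set (Fin n ⊕ Fin m))ᶜ} = n := by
    rw [Nat.card_congr (Equiv.subtypeUnivEquiv fun i => by simp), Nat.card_eq_fintype_card,
      Fintype.card_fin]
  have h2 : Nat.card {j : Fin m // Sum.inr j ∈ ({Sum.inr y} : Set (Fin n ⊕ Fin m))ᶜ} = m - 1 := by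
    rw [Nat.card_congr (Equiv.subtypeEquivRight (q := fun j => j ≠ y) fun j => by simp)]
    exact card_ne y
  rw [distNum_induce, h1, h2, Fab]

lemma distNum_rm_two (n m : ℕ) (x : Fin n) (y : Fin m) :
    distNum ((completeBipartiteGraph (Fin n) (Fin m)).induce
      (({Sum.inl x, Sum.inr y} : Set (Fin n ⊕ Fin m))ᶜ)) = Fab (n - 1) (m - 1) := by
  have h1 : Nat.card {i : Fin n // Sum.inl i ∈ ({Sum.inl x, Sum.inr y} : Set (Fin n ⊕ Fin m))ᶜ}
      = n - 1 := by
    rw [Nat.card_congr (Equiv.subtypeEquivRight (q := fun i => i ≠ x) fun i => by simp)]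
    exact card_ne x
  have h2 : Nat.card {j : Fin m // Sum.inr j ∈ ({Sum.inl x, Sum.inr y} : Set (Fin n ⊕ Fin m))ᶜ}
      = m - 1 := by
    rw [Nat.card_congr (Equiv.subtypeEquivRight (q := fun j => j ≠ y) fun j => by simp)]
    exact card_ne y
  rw [distNum_induce, h1, h2, Fab]



/-- Distinguishing stability of complete bipartite graphs. -/
theorem stD_completeBipartiteGraph (n m : ℕ) (hm : 1 ≤ m) (hnm : m ≤ n) :
    stD (completeBipartiteGraph (Fin n) (Fin m)) = if n = m + 1 then 2 else 1 := by
  have hn1 : 1 ≤ n := hm.trans hnm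
  have hG : distNum (completeBipartiteGraph (Fin n) (Fin m)) = if n = m then n + 1 else n := by
    rw [distNum_cbg]
    split_ifs <;> omega
  unfold stD
  have h0 : (0 : ℕ) ∉ {k : ℕ | ∃ S : Set (Fin n ⊕ Fin m), S ≠ Set.univ ∧ S.ncard = k ∧
      distNum ((completeBipartiteGraph (Fin n) (Fin m)).induce Sᶜ)
        ≠ distNum (completeBipartiteGraph (Fin n) (Fin m))} := by
    rintro ⟨S, hSu, hS0, hne⟩
    rw [Set.ncard_eq_zero (Set.toFinite S)] at hS0
    subst hS0
    rw [Set.compl_empty] at hne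
    exact hne (distNum_iso (induceUnivIso _))
  split_ifs with hcase
  · -- n = m + 1 : answer 2
    have h2 : (2 : ℕ) ∈ {k : ℕ | ∃ S : Set (Fin n ⊕ Fin m), S ≠ Set.univ ∧ S.ncard = k ∧
        distNum ((completeBipartiteGraph (Fin n) (Fin m)).induce Sᶜ)
          ≠ distNum (completeBipartiteGraph (Fin n) (Fin m))} := by
      refine ⟨{Sum.inl ⟨0, hn1⟩, Sum.inr ⟨0, hm⟩}, ?_, ?_, ?_⟩
      · refine (Set.ne_univ_iff_exists_notMem _).mpr ⟨Sum.inl ⟨1, by omega⟩, ?_⟩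
        simp [Fin.ext_iff]
      · exact Set.ncard_pair (by simp)
      · rw [distNum_rm_two, hG]
        unfold Fab
        split_ifs <;> omega
    have h1 : (1 : ℕ) ∉ {k : ℕ | ∃ S : Set (Fin n ⊕ Fin m), S ≠ Set.univ ∧ S.ncard = k ∧
        distNum ((completeBipartiteGraph (Fin n) (Fin m)).induce Sᶜ)
          ≠ distNum (completeBipartiteGraph (Fin n) (Fin m))} := by
      rintro ⟨S, hSu, hS1, hne⟩
      obtain ⟨v, rfl⟩ := Set.ncard_eq_one.mp hS1
      apply hne
      cases v with
      | inl x =>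
        rw [distNum_rm_left, hG]
        unfold Fab
        split_ifs <;> omega
      | inr y =>
        rw [distNum_rm_right, hG]
        unfold Fab
        split_ifs <;> omega
    have hmem := Nat.sInf_mem (⟨2, h2⟩ : Set.Nonempty _)
    have hle := Nat.sInf_le h2
    have hk0 : sInf _ ≠ 0 := fun h => h0 (h ▸ hmem)
    have hk1 : sInf _ ≠ 1 := fun h => h1 (h ▸ hmem)
    omega
  · -- n ≠ m + 1 : answer 1
    have h1 : (1 : ℕ) ∈ {k : ℕ | ∃ S : Set (Fin n ⊕ Fin m), S ≠ Set.univ ∧ S.ncard = k ∧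
        distNum ((completeBipartiteGraph (Fin n) (Fin m)).induce Sᶜ)
          ≠ distNum (completeBipartiteGraph (Fin n) (Fin m))} := by
      refine ⟨{Sum.inl ⟨0, hn1⟩}, ?_, Set.ncard_singleton _, ?_⟩
      · exact (Set.ne_univ_iff_exists_notMem _).mpr ⟨Sum.inr ⟨0, hm⟩, by simp⟩
      · rw [distNum_rm_left, hG]
        unfold Fab
        split_ifs <;> omega
    refine le_antisymm (Nat.sInf_le h1) (Nat.one_le_iff_ne_zero.mpr fun h => ?_)
    rcases Nat.sInf_eq_zero.mp h with h' | h'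
    · exact h0 h'
    · rw [h'] at h1
      exact Set.notMem_empty _ h1

end Helpers
end

section
/- Every graph G of order n ≥ 2 satisfies st_D(G) ≤ n − D(G) + 1. -/
open SimpleGraph

/-!
Any graph on `m` vertices is distinguished by giving every vertex its own label, so
`D(H) ≤ |V(H)|`. If `D(G) ≥ 2`, deleting all but `D(G) - 1` vertices of `G` therefore leaves a
graph with a smaller distinguishing number, at a cost of `n - D(G) + 1` vertices. If
`D(G) ≤ 1`, the bound is at least `n`, which no proper subset of `V(G)` exceeds.
-/

lemma distNum_le_natCard {W : Type*} [Finite W] (H : SimpleGraph W) :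
    distNum H ≤ Nat.card W :=
  Nat.sInf_le ⟨Finite.equivFin W, fun _ hφ x => (Finite.equivFin W).injective (hφ x)⟩

section

variable {V : Type*} (G : SimpleGraph V)

lemma stD_le_ncard {S : Set V} (hS : S ≠ Set.univ)
    (hD : distNum (G.induce Sᶜ) ≠ distNum G) : stD G ≤ S.ncard :=
  Nat.sInf_le ⟨S, hS, rfl, hD⟩

lemma stD_le_natCard [Finite V] : stD G ≤ Nat.card V := by
  rcases Set.eq_empty_or_nonempty {k : ℕ | ∃ S : Set V, S ≠ Set.univ ∧ S.ncard = k ∧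
      distNum (G.induce Sᶜ) ≠ distNum G} with hempty | hne
  · simp only [stD, hempty, Nat.sInf_empty, zero_le]
  · obtain ⟨S, -, hS, -⟩ := Nat.sInf_mem hne
    exact hS.symm.trans_le S.ncard_le_card

lemma stD_le_natCard_sub_distNum_add_one_of_two_le [Finite V] (hD : 2 ≤ distNum G) :
    stD G ≤ Nat.card V - distNum G + 1 := by
  have hDV : distNum G ≤ Nat.card V := distNum_le_natCard G
  obtain ⟨T, -, hT⟩ := Set.exists_subset_card_eq (s := (Set.univ : Set V))
    (n := distNum G - 1) (by rw [Set.ncard_univ]; omega)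
  have hT_ne : Tᶜ ≠ Set.univ := Set.compl_ne_univ.mpr (Set.nonempty_of_ncard_ne_zero (by omega))
  have hD_induce : distNum (G.induce T) < distNum G := by
    have := distNum_le_natCard (G.induce T)
    rw [Nat.card_coe_set_eq, hT] at this
    omega
  calc stD G ≤ Tᶜ.ncard := stD_le_ncard G hT_ne (by rw [compl_compl]; omega)
    _ = Nat.card V - distNum G + 1 := by rw [Set.ncard_compl, hT]; omega

end

theorem stD_le_card_sub_distNum_general {V : Type*} [Fintype V] (G : SimpleGraph V) :
    stD G ≤ Fintype.card V - distNum G + 1 := by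
  rw [← Nat.card_eq_fintype_card]
  rcases le_or_gt 2 (distNum G) with hD | hD
  · exact stD_le_natCard_sub_distNum_add_one_of_two_le G hD
  · exact (stD_le_natCard G).trans (by omega)

/-- $st_D(G) \le n - D(G) + 1$. -/
theorem stD_le_card_sub_distNum {V : Type*} [Fintype V] (G : SimpleGraph V)
    (h : 2 ≤ Fintype.card V) :
    stD G ≤ Fintype.card V - distNum G + 1 :=
  stD_le_card_sub_distNum_general G
end
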